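/- arXiv:2101.06816 — 6 statements merged into one kernel-verified Lean document; each statement's English description precedes it below -/
import Mathlib

section
/- Let K ≥ 2 and let A, B be K×K real matrices such that B i j > 0 for all i, j, A i j ≥ B i j for all i, j, and A i j > B i j whenever i ≠ j. Then for every natural number M ≥ 2, every entry of A^M is strictly greater than the corresponding entry of B^M; in particular trace(A^M) > trace(B^M). -/
/-!
Matrix multiplication is entrywise monotone on nonnegative matrices, so `B ^ n ≤ A ^ n`
entrywise. For `B ^ 2 < A ^ 2` at `(i, j)` one uses a path `i → k → j` with `k ≠ i`, whose first
step is strictly larger in `A`; this needs a second index. For `M ≥ 2`, write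
`B ^ M = B ^ 2 * B ^ (M - 2)` and use the path that stays at `j` in the second factor:
`(B ^ (M - 2)) j j > 0` because the diagonal of `B` is positive.
-/

namespace Matrix

variable {m n o α : Type*} [Semiring α] [PartialOrder α]

section Mul

variable [Fintype n] {A B : Matrix m n α} {A' B' : Matrix n o α}

theorem mul_apply_le_mul_apply [IsOrderedRing α] (hB : ∀ i j, 0 ≤ B i j)
    (hBA : ∀ i j, B i j ≤ A i j) (hB' : ∀ i j, 0 ≤ B' i j) (hBA' : ∀ i j, B' i j ≤ A' i j)
    (i : m) (j : o) : (B * B') i j ≤ (A * A') i j :=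
  Finset.sum_le_sum fun k _ ↦
    mul_le_mul (hBA i k) (hBA' k j) (hB' k j) ((hB i k).trans (hBA i k))

theorem mul_apply_lt_mul_apply [IsStrictOrderedRing α] (hB : ∀ i j, 0 ≤ B i j)
    (hBA : ∀ i j, B i j ≤ A i j) (hB' : ∀ i j, 0 ≤ B' i j) (hBA' : ∀ i j, B' i j ≤ A' i j)
    {i : m} {j : o} (k : n) (hk : B i k * B' k j < A i k * A' k j) :
    (B * B') i j < (A * A') i j :=
  Finset.sum_lt_sum
    (fun l _ ↦ mul_le_mul (hBA i l) (hBA' l j) (hB' l j) ((hB i l).trans (hBA i l)))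
    ⟨k, Finset.mem_univ k, hk⟩

end Mul

variable [Fintype n] [DecidableEq n] {A B : Matrix n n α}

theorem pow_apply_le_pow_apply [IsOrderedRing α] (hB : ∀ i j, 0 ≤ B i j)
    (hBA : ∀ i j, B i j ≤ A i j) (k : ℕ) (i j : n) : (B ^ k) i j ≤ (A ^ k) i j := by
  induction k generalizing i j with
  | zero => exact le_rfl
  | succ k ih =>
    rw [pow_succ, pow_succ]
    exact mul_apply_le_mul_apply (pow_apply_nonneg hB k) ih hB hBA i j

theorem pow_apply_self_pos [IsStrictOrderedRing α] (hB : ∀ i j, 0 ≤ B i j)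
    (hBdiag : ∀ i, 0 < B i i) (k : ℕ) (i : n) : 0 < (B ^ k) i i := by
  induction k with
  | zero => simp
  | succ k ih =>
    rw [pow_succ, mul_apply]
    exact Finset.sum_pos' (fun l _ ↦ mul_nonneg (pow_apply_nonneg hB k i l) (hB l i))
      ⟨i, Finset.mem_univ i, mul_pos ih (hBdiag i)⟩

variable [IsStrictOrderedRing α]

theorem sq_apply_lt_sq_apply [Nontrivial n] (hBpos : ∀ i j, 0 < B i j)
    (hBA : ∀ i j, B i j ≤ A i j) (hlt : ∀ i j, i ≠ j → B i j < A i j) (i j : n) :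
    (B ^ 2) i j < (A ^ 2) i j := by
  have hB : ∀ i j, 0 ≤ B i j := fun i j ↦ (hBpos i j).le
  obtain ⟨k, hki⟩ := exists_ne i
  rw [sq, sq]
  exact mul_apply_lt_mul_apply hB hBA hB hBA k <|
    mul_lt_mul (hlt i k hki.symm) (hBA k j) (hBpos k j) ((hB i k).trans (hBA i k))

theorem pow_apply_lt_pow_apply [Nontrivial n] (hBpos : ∀ i j, 0 < B i j)
    (hBA : ∀ i j, B i j ≤ A i j) (hlt : ∀ i j, i ≠ j → B i j < A i j)
    {M : ℕ} (hM : 2 ≤ M) (i j : n) : (B ^ M) i j < (A ^ M) i j := by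
  have hB : ∀ i j, 0 ≤ B i j := fun i j ↦ (hBpos i j).le
  have hA : ∀ i j, 0 ≤ A i j := fun i j ↦ (hB i j).trans (hBA i j)
  obtain ⟨k, rfl⟩ := Nat.exists_eq_add_of_le hM
  rw [pow_add, pow_add]
  exact mul_apply_lt_mul_apply (pow_apply_nonneg hB 2) (pow_apply_le_pow_apply hB hBA 2)
    (pow_apply_nonneg hB k) (pow_apply_le_pow_apply hB hBA k) j <|
    mul_lt_mul (sq_apply_lt_sq_apply hBpos hBA hlt i j) (pow_apply_le_pow_apply hB hBA k j j)
      (pow_apply_self_pos hB (fun i ↦ hBpos i i) k j) (pow_apply_nonneg hA 2 i j)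

end Matrix

theorem stmt_1 (K : ℕ) (hK : 2 ≤ K) (A B : Matrix (Fin K) (Fin K) ℝ)
    (hBpos : ∀ i j, 0 < B i j)
    (hle : ∀ i j, B i j ≤ A i j)
    (hlt : ∀ i j, i ≠ j → B i j < A i j) :
    ∀ M : ℕ, 2 ≤ M →
      (∀ i j, (B ^ M) i j < (A ^ M) i j) ∧ (B ^ M).trace < (A ^ M).trace := by
  have : Nontrivial (Fin K) := Fin.nontrivial_iff_two_le.mpr hK
  intro M hM
  have hentry := Matrix.pow_apply_lt_pow_apply hBpos hle hlt hM
  exact ⟨hentry, Finset.sum_lt_sum_of_nonempty Finset.univ_nonempty fun i _ ↦ hentry i i⟩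
end

section
/- Let N ≥ K ≥ 1 with K ≤ N, let c > 0 and φ be real numbers. For a strictly monotone selection map s : Fin K → Fin N define the K×K complex matrix R_s with (i,j) entry exp(I·φ·((s i : ℝ) − (s j : ℝ))) · exp(−c·((s i : ℝ) − (s j : ℝ))²). Then each R_s is Hermitian, and for the consecutive (uniform linear array) selection u : Fin K → Fin N given by u i = i (via the inclusion Fin K ↪ Fin N), the largest eigenvalue of R_u is greater than or equal to the largest eigenvalue of R_s for every strictly monotone selection s. -/
/-!
Let `x` be a unit eigenvector of `R_s` with eigenvalue `λ`. The triangle inequality gives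
`λ ≤ ∑ |x_i| |x_j| exp (-c (s_i - s_j)²)`, and strict monotonicity gives `|i - j| ≤ |s_i - s_j|`,
so every Gaussian factor can only grow when `s` is replaced by the consecutive array `u`. Since the
phases of `R_u` factor as `e^{iφi} e^{-iφj}`, the resulting sum is the quadratic form of `R_u` at
the unit vector `w_i = e^{iφi} |x_i|`, which is at most the largest eigenvalue of `R_u`.
-/

open Matrix Finset ComplexConjugate
open scoped MatrixOrder ComplexOrder

namespace Matrix

theorem re_star_dotProduct_mulVec_le_sum_norm {n : Type*} [Fintype n] (A : Matrix n n ℂ)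
    (x : n → ℂ) : (star x ⬝ᵥ A *ᵥ x).re ≤ ∑ i, ∑ j, ‖x i‖ * ‖A i j‖ * ‖x j‖ := by
  calc (star x ⬝ᵥ A *ᵥ x).re ≤ ‖star x ⬝ᵥ A *ᵥ x‖ := Complex.re_le_norm _
    _ = ‖∑ i, ∑ j, star (x i) * A i j * x j‖ := by
      simp only [dotProduct, mulVec, mul_sum, Pi.star_apply, mul_assoc]
    _ ≤ ∑ i, ∑ j, ‖star (x i) * A i j * x j‖ :=
      (norm_sum_le _ _).trans (sum_le_sum fun i _ => norm_sum_le _ _)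
    _ = ∑ i, ∑ j, ‖x i‖ * ‖A i j‖ * ‖x j‖ := by simp only [norm_mul, norm_star]

theorem re_star_dotProduct_self {n : Type*} [Fintype n] (x : n → ℂ) :
    (star x ⬝ᵥ x).re = ∑ i, ‖x i‖ ^ 2 := by
  simp [dotProduct, Complex.conj_mul', ← Complex.ofReal_pow]

namespace IsHermitian

variable {n : Type*} [Fintype n] [DecidableEq n]

theorem re_star_dotProduct_mulVec_le_iSup_eigenvalues_mul {𝕜 : Type*} [RCLike 𝕜]
    {A : Matrix n n 𝕜} (hA : A.IsHermitian) (x : n → 𝕜) :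
    RCLike.re (star x ⬝ᵥ A *ᵥ x) ≤ (⨆ i, hA.eigenvalues i) * RCLike.re (star x ⬝ᵥ x) := by
  have hle : A ≤ algebraMap ℝ (Matrix n n 𝕜) (⨆ i, hA.eigenvalues i) := by
    refine le_algebraMap_of_spectrum_le (fun r hr => ?_) hA.isSelfAdjoint
    obtain ⟨i, rfl⟩ := hA.spectrum_real_eq_range_eigenvalues ▸ hr
    exact le_ciSup (Set.finite_range _).bddAbove i
  have := (RCLike.nonneg_iff.mp ((Matrix.le_iff.mp hle).dotProduct_mulVec_nonneg x)).1
  simpa [sub_mulVec, dotProduct_sub, Algebra.algebraMap_eq_smul_one, smul_mulVec,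
    RCLike.smul_re] using this

theorem iSup_eigenvalues_le_of_norm_le {A B : Matrix n n ℂ} (hA : A.IsHermitian)
    (hB : B.IsHermitian) (p : n → ℂ) (hp : ∀ i, ‖p i‖ = 1) (b : n → n → ℝ)
    (hBpb : ∀ i j, B i j = p i * b i j * conj (p j)) (hAb : ∀ i j, ‖A i j‖ ≤ b i j) :
    (⨆ i, hA.eigenvalues i) ≤ ⨆ i, hB.eigenvalues i := by
  cases isEmpty_or_nonempty n
  · simp
  refine ciSup_le fun k => ?_
  set x : n → ℂ := ⇑(hA.eigenvectorBasis k)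
  set w : n → ℂ := fun i => p i * ‖x i‖
  have hw : ∀ i, ‖w i‖ = ‖x i‖ := fun i => by simp [w, hp]
  have hx_unit : ∑ i, ‖x i‖ ^ 2 = 1 := by
    rw [← EuclideanSpace.norm_sq_eq, hA.eigenvectorBasis.orthonormal.1 k, one_pow]
  have hw_unit : (star w ⬝ᵥ w).re = 1 := by simp only [re_star_dotProduct_self, hw, hx_unit]
  have hw_form : (star w ⬝ᵥ B *ᵥ w).re = ∑ i, ∑ j, ‖x i‖ * b i j * ‖x j‖ := by
    have hpp : ∀ i, conj (p i) * p i = 1 := fun i => by simp [Complex.conj_mul', hp]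
    have hterm : ∀ i j, star (w i) * (B i j * w j) = ((‖x i‖ * b i j * ‖x j‖ : ℝ) : ℂ) :=
      fun i j => by
        simp only [w, hBpb, star_mul', Complex.star_def, Complex.conj_ofReal]
        push_cast
        linear_combination (‖x i‖ * b i j * ‖x j‖ : ℂ) * (conj (p j) * p j * hpp i + hpp j)
    simp only [dotProduct, mulVec, mul_sum, Pi.star_apply, hterm, ← Complex.ofReal_sum,
      Complex.ofReal_re]
  calc hA.eigenvalues k = (star x ⬝ᵥ A *ᵥ x).re := hA.eigenvalues_eq k
    _ ≤ ∑ i, ∑ j, ‖x i‖ * ‖A i j‖ * ‖x j‖ := re_star_dotProduct_mulVec_le_sum_norm A x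
    _ ≤ ∑ i, ∑ j, ‖x i‖ * b i j * ‖x j‖ := by gcongr with i _ j _; exact hAb i j
    _ = (star w ⬝ᵥ B *ᵥ w).re := hw_form.symm
    _ ≤ (⨆ i, hB.eigenvalues i) * (star w ⬝ᵥ w).re :=
      hB.re_star_dotProduct_mulVec_le_iSup_eigenvalues_mul w
    _ = ⨆ i, hB.eigenvalues i := by rw [hw_unit, mul_one]

end IsHermitian

end Matrix

theorem StrictMono.abs_sub_le_abs_sub {K N : ℕ} {s : Fin K → Fin N} (hs : StrictMono s)
    (i j : Fin K) : |((i : ℕ) : ℝ) - ((j : ℕ) : ℝ)| ≤ |((s i : ℕ) : ℝ) - ((s j : ℕ) : ℝ)| := by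
  wlog hji : j ≤ i generalizing i j
  · rw [abs_sub_comm, abs_sub_comm ((s i : ℕ) : ℝ)]
    exact this j i (le_of_not_ge hji)
  have hcard : #(Icc j i) ≤ #(Icc (s j) (s i)) :=
    card_le_card_of_injOn s (fun k hk => by simp_all [hs.monotone.imp]) hs.injective.injOn
  rw [Fin.card_Icc, Fin.card_Icc] at hcard
  have hsji : s j ≤ s i := hs.monotone hji
  have : |((i : ℕ) : ℤ) - (j : ℕ)| ≤ |((s i : ℕ) : ℤ) - (s j : ℕ)| := by
    rw [abs_of_nonneg (by omega), abs_of_nonneg (by omega)]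
    omega
  exact_mod_cast this

section GaussianScattering

variable {n : Type*}

/-- `x` holds the sensor positions in units of the grid spacing. -/
noncomputable def gaussianScatteringMatrix (c φ : ℝ) (x : n → ℝ) : Matrix n n ℂ :=
  of fun i j => Complex.exp (Complex.I * φ * ((x i - x j : ℝ) : ℂ)) *
    Complex.exp (-((c * (x i - x j) ^ 2 : ℝ) : ℂ))

theorem gaussianScatteringMatrix_apply (c φ : ℝ) (x : n → ℝ) (i j : n) :
    gaussianScatteringMatrix c φ x i j = Complex.exp ((φ * x i : ℝ) * Complex.I) *
      (Real.exp (-(c * (x i - x j) ^ 2)) : ℂ) *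
        conj (Complex.exp ((φ * x j : ℝ) * Complex.I)) := by
  simp only [gaussianScatteringMatrix, of_apply, ← Complex.exp_conj, Complex.ofReal_exp,
    ← Complex.exp_add, map_mul, Complex.conj_ofReal, Complex.conj_I]
  congr 1
  push_cast
  ring

theorem isHermitian_gaussianScatteringMatrix (c φ : ℝ) (x : n → ℝ) :
    (gaussianScatteringMatrix c φ x).IsHermitian := by
  ext i j
  simp only [conjTranspose_apply, gaussianScatteringMatrix_apply, star_mul', Complex.star_def,
    Complex.conj_conj, Complex.conj_ofReal, sub_sq_comm (x j)]
  ring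

theorem norm_gaussianScatteringMatrix_apply (c φ : ℝ) (x : n → ℝ) (i j : n) :
    ‖gaussianScatteringMatrix c φ x i j‖ = Real.exp (-(c * (x i - x j) ^ 2)) := by
  rw [gaussianScatteringMatrix_apply, norm_mul, norm_mul, Complex.norm_conj,
    Complex.norm_exp_ofReal_mul_I, Complex.norm_exp_ofReal_mul_I, Complex.norm_real,
    Real.norm_of_nonneg (Real.exp_pos _).le, one_mul, mul_one]

theorem iSup_eigenvalues_gaussianScatteringMatrix_le [Fintype n] [DecidableEq n] {c : ℝ}
    (hc : 0 ≤ c) (φ : ℝ) {x y : n → ℝ} (hxy : ∀ i j, |y i - y j| ≤ |x i - x j|) :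
    (⨆ i, (isHermitian_gaussianScatteringMatrix c φ x).eigenvalues i) ≤
      ⨆ i, (isHermitian_gaussianScatteringMatrix c φ y).eigenvalues i := by
  refine IsHermitian.iSup_eigenvalues_le_of_norm_le _ _
    (fun i => Complex.exp ((φ * y i : ℝ) * Complex.I)) (fun i => Complex.norm_exp_ofReal_mul_I _)
    _ (gaussianScatteringMatrix_apply c φ y) fun i j => ?_
  rw [norm_gaussianScatteringMatrix_apply, Real.exp_le_exp, neg_le_neg_iff]
  exact mul_le_mul_of_nonneg_left (sq_le_sq.mpr (hxy i j)) hc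

end GaussianScattering

theorem stmt_4_general (N K : ℕ) (c φ : ℝ) (hc : 0 < c)
    (R : (Fin K → Fin N) → Matrix (Fin K) (Fin K) ℂ)
    (hR : ∀ s : Fin K → Fin N, R s = Matrix.of fun i j =>
      Complex.exp (Complex.I * (φ : ℂ) * (((((s i : ℕ) : ℝ) - ((s j : ℕ) : ℝ)) : ℝ) : ℂ)) *
        Complex.exp (-(((c * (((s i : ℕ) : ℝ) - ((s j : ℕ) : ℝ)) ^ 2) : ℝ) : ℂ)))
    (u : Fin K → Fin N) (hu : ∀ i : Fin K, (u i : ℕ) = (i : ℕ)) :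
    ∀ s : Fin K → Fin N, StrictMono s →
      ∃ (hs : (R s).IsHermitian) (hu' : (R u).IsHermitian),
        (⨆ i, hs.eigenvalues i) ≤ ⨆ i, hu'.eigenvalues i := by
  obtain rfl : R = fun t => gaussianScatteringMatrix c φ fun i => ((t i : ℕ) : ℝ) := funext hR
  intro s hs
  refine ⟨isHermitian_gaussianScatteringMatrix _ _ _, isHermitian_gaussianScatteringMatrix _ _ _,
    iSup_eigenvalues_gaussianScatteringMatrix_le hc.le φ fun i j => ?_⟩
  simpa only [hu] using hs.abs_sub_le_abs_sub i j

theorem stmt_4 (N K : ℕ) (hK : 1 ≤ K) (hKN : K ≤ N) (c φ : ℝ) (hc : 0 < c)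
    (R : (Fin K → Fin N) → Matrix (Fin K) (Fin K) ℂ)
    (hR : ∀ s : Fin K → Fin N, R s = Matrix.of fun i j =>
      Complex.exp (Complex.I * (φ : ℂ) * (((((s i : ℕ) : ℝ) - ((s j : ℕ) : ℝ)) : ℝ) : ℂ)) *
        Complex.exp (-(((c * (((s i : ℕ) : ℝ) - ((s j : ℕ) : ℝ)) ^ 2) : ℝ) : ℂ)))
    (u : Fin K → Fin N) (hu : ∀ i : Fin K, (u i : ℕ) = (i : ℕ)) :
    ∀ s : Fin K → Fin N, StrictMono s →
      ∃ (hs : (R s).IsHermitian) (hu' : (R u).IsHermitian),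
        (⨆ i, hs.eigenvalues i) ≤ ⨆ i, hu'.eigenvalues i :=
  stmt_4_general N K c φ hc R hR u hu
end

section
/- Let N ≥ 1, let R_n be an N×N complex Hermitian positive definite matrix, and let R_s be an N×N complex Hermitian positive semidefinite matrix. Then there exist a vector w ≠ 0 and a real μ ≥ 0 such that R_s *ᵥ w = μ • (R_n *ᵥ w), and for every vector v ≠ 0, Q_{R_s}(v) ≤ μ · Q_{R_n}(v), where Q_R(v) = re(star v ⬝ᵥ (R *ᵥ v)). -/
/-!
Write `Rn = T * T` with `T = √Rn` Hermitian and invertible. The substitution `x = T v` turns the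
pair `(Rs, Rn)` into `(S, 1)` with `S = T⁻¹ Rs T⁻¹` Hermitian, so the generalized Rayleigh quotient
becomes an ordinary one. Its maximum is the top eigenvalue `μ` of `S`, because `μ • 1 - S` is
positive semidefinite (`S ≤ algebraMap μ` in the Loewner order exactly when the spectrum of `S` lies
below `μ`), and a top eigenvector `u` of `S` gives the generalized eigenvector `w = T⁻¹ u`.
Finally `μ ≥ 0` since `wᴴ Rs w = μ wᴴ Rn w` with `wᴴ Rs w ≥ 0` and `wᴴ Rn w > 0`.
-/

open Matrix
open scoped ComplexOrder

namespace Matrix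

variable {m n 𝕜 : Type*} [Fintype m] [Fintype n] [RCLike 𝕜]

lemma star_dotProduct_conjTranspose_mul_mul_mulVec (T : Matrix m n 𝕜) (M : Matrix m m 𝕜)
    (v : n → 𝕜) : star v ⬝ᵥ ((Tᴴ * M * T) *ᵥ v) = star (T *ᵥ v) ⬝ᵥ (M *ᵥ (T *ᵥ v)) := by
  rw [star_mulVec, ← dotProduct_mulVec, ← mulVec_mulVec, ← mulVec_mulVec]

lemma PosSemidef.nonneg_of_mulVec_eq_smul_mulVec {A B : Matrix n n 𝕜} (hA : A.PosSemidef)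
    (hB : B.PosDef) {w : n → 𝕜} (hw : w ≠ 0) {μ : ℝ} (h : A *ᵥ w = (μ : 𝕜) • (B *ᵥ w)) :
    0 ≤ μ := by
  have hAw := hA.re_dotProduct_nonneg w
  rw [h, dotProduct_smul, smul_eq_mul, RCLike.re_ofReal_mul] at hAw
  exact nonneg_of_mul_nonneg_left hAw (hB.re_dotProduct_pos hw)

variable [DecidableEq n]

open scoped MatrixOrder in
lemma IsHermitian.re_dotProduct_mulVec_le {A : Matrix n n 𝕜} (hA : A.IsHermitian) {μ : ℝ}
    (hμ : ∀ i, hA.eigenvalues i ≤ μ) (x : n → 𝕜) :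
    RCLike.re (star x ⬝ᵥ (A *ᵥ x)) ≤ μ * RCLike.re (star x ⬝ᵥ x) := by
  have hle : A ≤ algebraMap ℝ (Matrix n n 𝕜) μ := by
    rw [le_algebraMap_iff_spectrum_le hA.isSelfAdjoint, hA.spectrum_real_eq_range_eigenvalues]
    rintro _ ⟨i, rfl⟩
    exact hμ i
  have := (le_iff.mp hle).re_dotProduct_nonneg x
  rwa [Algebra.algebraMap_eq_smul_one, sub_mulVec, dotProduct_sub, map_sub, sub_nonneg,
    smul_mulVec, one_mulVec, dotProduct_smul, RCLike.smul_re] at this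

lemma IsHermitian.exists_top_eigenvector [Nonempty n] {A : Matrix n n 𝕜}
    (hA : A.IsHermitian) :
    ∃ u ≠ 0, ∃ μ : ℝ, A *ᵥ u = (μ : 𝕜) • u ∧
      ∀ x, RCLike.re (star x ⬝ᵥ (A *ᵥ x)) ≤ μ * RCLike.re (star x ⬝ᵥ x) := by
  obtain ⟨i, hi⟩ := Finite.exists_max hA.eigenvalues
  refine ⟨⇑(hA.eigenvectorBasis i), ?_, hA.eigenvalues i, ?_, hA.re_dotProduct_mulVec_le hi⟩
  · simpa using hA.eigenvectorBasis.orthonormal.ne_zero i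
  · rw [hA.mulVec_eigenvectorBasis, RCLike.real_smul_eq_coe_smul (K := 𝕜)]

lemma PosDef.exists_isHermitian_isUnit_mul_self {B : Matrix n n 𝕜} (hB : B.PosDef) :
    ∃ T : Matrix n n 𝕜, T.IsHermitian ∧ IsUnit T ∧ T * T = B := by
  open scoped MatrixOrder in
  exact ⟨CFC.sqrt B, (CFC.sqrt_nonneg B).posSemidef.isHermitian,
    (CFC.isUnit_sqrt_iff B hB.posSemidef.nonneg).mpr hB.isUnit,
    CFC.sqrt_mul_sqrt_self B hB.posSemidef.nonneg⟩

lemma IsHermitian.exists_top_generalized_eigenvector [Nonempty n] {A B : Matrix n n 𝕜}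
    (hA : A.IsHermitian) (hB : B.PosDef) :
    ∃ w ≠ 0, ∃ μ : ℝ, A *ᵥ w = (μ : 𝕜) • (B *ᵥ w) ∧
      ∀ v, RCLike.re (star v ⬝ᵥ (A *ᵥ v)) ≤ μ * RCLike.re (star v ⬝ᵥ (B *ᵥ v)) := by
  obtain ⟨T, hT, hTu, rfl⟩ := hB.exists_isHermitian_isUnit_mul_self
  have hTdet : IsUnit T.det := (isUnit_iff_isUnit_det T).mp hTu
  obtain ⟨S, hS, rfl⟩ : ∃ S : Matrix n n 𝕜, S.IsHermitian ∧ A = Tᴴ * S * T := by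
    refine ⟨(T⁻¹)ᴴ * A * T⁻¹, isHermitian_conjTranspose_mul_mul _ hA, ?_⟩
    rw [conjTranspose_nonsing_inv, hT.eq, ← mul_assoc, ← mul_assoc, mul_nonsing_inv _ hTdet,
      one_mul, mul_assoc, nonsing_inv_mul _ hTdet, mul_one]
  have hB_eq : T * T = Tᴴ * 1 * T := by rw [hT.eq, mul_one]
  obtain ⟨u, hu0, μ, hu, hle⟩ := hS.exists_top_eigenvector
  have hTinv : T *ᵥ (T⁻¹ *ᵥ u) = u := by rw [mulVec_mulVec, mul_nonsing_inv _ hTdet, one_mulVec]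
  refine ⟨T⁻¹ *ᵥ u, fun h => hu0 (by rw [← hTinv, h, mulVec_zero]), μ, ?_, fun v => ?_⟩
  · rw [hB_eq, ← mulVec_mulVec, ← mulVec_mulVec, hTinv, hu,
      ← mulVec_mulVec, ← mulVec_mulVec, hTinv, one_mulVec, mulVec_smul]
  · rw [hB_eq, star_dotProduct_conjTranspose_mul_mul_mulVec,
      star_dotProduct_conjTranspose_mul_mul_mulVec, one_mulVec]
    exact hle _

end Matrix

theorem stmt_8 (N : ℕ) (hN : 1 ≤ N) (Rn Rs : Matrix (Fin N) (Fin N) ℂ)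
    (hRn : Rn.PosDef) (hRs : Rs.PosSemidef) :
    ∃ w : Fin N → ℂ, w ≠ 0 ∧ ∃ μ : ℝ, 0 ≤ μ ∧
      Rs *ᵥ w = (μ : ℂ) • (Rn *ᵥ w) ∧
      ∀ v : Fin N → ℂ, v ≠ 0 →
        (star v ⬝ᵥ (Rs *ᵥ v)).re ≤ μ * (star v ⬝ᵥ (Rn *ᵥ v)).re := by
  have : Nonempty (Fin N) := ⟨⟨0, hN⟩⟩
  obtain ⟨w, hw, μ, hRsw, hle⟩ := hRs.isHermitian.exists_top_generalized_eigenvector hRn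
  exact ⟨w, hw, μ, hRs.nonneg_of_mulVec_eq_smul_mulVec hRn hw hRsw, hRsw, fun v _ => hle v⟩
end

section
/- Let N ≥ 1 and let T be the N×N exchange matrix with entries T i j = 1 if (i : ℕ) + (j : ℕ) = N − 1 and 0 otherwise. Let R₁, R₂ be N×N complex matrices with R₁ invertible, T * (R₁.map conj) * T = R₁ and T * (R₂.map conj) * T = R₂. If λ is real and w satisfies (R₁⁻¹ * R₂) *ᵥ w = λ • w, then (R₁⁻¹ * R₂) *ᵥ (T *ᵥ (star w)) = λ • (T *ᵥ (star w)). Moreover, if w ≠ 0 and every vector u with (R₁⁻¹ * R₂) *ᵥ u = λ • u is a complex scalar multiple of w, then there exists c : ℂ with T *ᵥ (star w) = c • w. -/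
/-!
Conjugation by the exchange matrix `T` (an involution) turns a conjugate-persymmetric `A` into
`conj A`, so `v ↦ T * conj v` intertwines `A` with itself; conjugate-persymmetric matrices are
closed under products and inverses, hence `R₁⁻¹ * R₂` is one, and this antilinear map preserves
each of its real eigenspaces. A one-dimensional eigenspace containing `w` therefore contains
`T * conj w` as a multiple of `w`.
-/

open Matrix

theorem mul_mul_cancel_of_mul_self_eq_one {M : Type*} [Monoid M] {a : M} (h : a * a = 1) (b : M) :
    a * (a * b) = b := by
  rw [← mul_assoc, h, one_mul]

namespace Matrix

theorem exchange_mul_self {α : Type*} [Semiring α] {N : ℕ} {T : Matrix (Fin N) (Fin N) α}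
    (hT : ∀ i j : Fin N, T i j = if (i : ℕ) + (j : ℕ) = N - 1 then 1 else 0) : T * T = 1 := by
  have hrev : ∀ i j : Fin N, T i j = if i.rev = j then 1 else 0 := fun i j => by
    have : (i : ℕ) + j = N - 1 ↔ i.rev = j := by rw [Fin.ext_iff, Fin.val_rev]; omega
    simp only [hT, this]
  ext i k
  simp only [mul_apply, hrev, ite_mul, one_mul, zero_mul, Finset.sum_ite_eq, Finset.mem_univ,
    if_true, Fin.rev_rev, one_apply]

variable {n α : Type*} [Fintype n] [CommRing α] [StarRing α]

theorem map_starRingEnd_mulVec_star (A : Matrix n n α) (v : n → α) :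
    A.map (starRingEnd α) *ᵥ star v = star (A *ᵥ v) := by
  ext i
  simp only [mulVec, dotProduct, Pi.star_apply, map_apply, star_sum, star_mul', starRingEnd_apply]

theorem map_starRingEnd_nonsing_inv [DecidableEq n] (A : Matrix n n α) :
    A⁻¹.map (starRingEnd α) = (A.map (starRingEnd α))⁻¹ := by
  have h : ∀ B : Matrix n n α, B.map (starRingEnd α) = Bᴴᵀ := fun _ => rfl
  rw [h, h, conjTranspose_nonsing_inv, transpose_nonsing_inv]

def IsConjPersymm (J A : Matrix n n α) : Prop :=
  J * A.map (starRingEnd α) * J = A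

namespace IsConjPersymm

variable [DecidableEq n] {J A B : Matrix n n α}

theorem map_starRingEnd_eq (hJ : J * J = 1) (hA : IsConjPersymm J A) :
    A.map (starRingEnd α) = J * A * J := by
  conv_rhs => rw [← hA]
  simp only [Matrix.mul_assoc, hJ, mul_mul_cancel_of_mul_self_eq_one hJ, Matrix.mul_one]

theorem mul (hJ : J * J = 1) (hA : IsConjPersymm J A) (hB : IsConjPersymm J B) :
    IsConjPersymm J (A * B) := by
  unfold IsConjPersymm
  rw [Matrix.map_mul, hA.map_starRingEnd_eq hJ, hB.map_starRingEnd_eq hJ]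
  simp only [Matrix.mul_assoc, hJ, mul_mul_cancel_of_mul_self_eq_one hJ, Matrix.mul_one]

theorem inv (hJ : J * J = 1) (hA : IsConjPersymm J A) : IsConjPersymm J A⁻¹ := by
  unfold IsConjPersymm
  rw [map_starRingEnd_nonsing_inv, hA.map_starRingEnd_eq hJ, mul_inv_rev, mul_inv_rev,
    inv_eq_left_inv hJ]
  simp only [Matrix.mul_assoc, hJ, mul_mul_cancel_of_mul_self_eq_one hJ, Matrix.mul_one]

theorem mulVec_mulVec_star_of_mulVec_eq_smul (hJ : J * J = 1) (hA : IsConjPersymm J A)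
    {μ : α} (hμ : star μ = μ) {v : n → α} (hv : A *ᵥ v = μ • v) :
    A *ᵥ (J *ᵥ star v) = μ • (J *ᵥ star v) :=
  calc A *ᵥ (J *ᵥ star v) = J *ᵥ (A.map (starRingEnd α) *ᵥ star v) := by
        conv_lhs => rw [← hA]
        simp only [mulVec_mulVec, Matrix.mul_assoc, hJ, Matrix.mul_one]
    _ = μ • (J *ᵥ star v) := by
        rw [map_starRingEnd_mulVec_star, hv, star_smul, hμ, mulVec_smul]

end IsConjPersymm

end Matrix

theorem stmt_9_general (N : ℕ) (T R₁ R₂ : Matrix (Fin N) (Fin N) ℂ)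
    (hT : ∀ i j : Fin N, T i j = if (i : ℕ) + (j : ℕ) = N - 1 then 1 else 0)
    (h1 : T * R₁.map (starRingEnd ℂ) * T = R₁)
    (h2 : T * R₂.map (starRingEnd ℂ) * T = R₂)
    (lam : ℝ) (w : Fin N → ℂ)
    (hw : (R₁⁻¹ * R₂) *ᵥ w = (lam : ℂ) • w) :
    (R₁⁻¹ * R₂) *ᵥ (T *ᵥ star w) = (lam : ℂ) • (T *ᵥ star w) ∧
      (w ≠ 0 →
        (∀ u : Fin N → ℂ, (R₁⁻¹ * R₂) *ᵥ u = (lam : ℂ) • u → ∃ c : ℂ, u = c • w) →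
        ∃ c : ℂ, T *ᵥ star w = c • w) := by
  have hTT : T * T = 1 := exchange_mul_self hT
  have hR : IsConjPersymm T (R₁⁻¹ * R₂) := (IsConjPersymm.inv hTT h1).mul hTT h2
  have heig : (R₁⁻¹ * R₂) *ᵥ (T *ᵥ star w) = (lam : ℂ) • (T *ᵥ star w) :=
    hR.mulVec_mulVec_star_of_mulVec_eq_smul hTT (Complex.conj_ofReal lam) hw
  exact ⟨heig, fun _ huniq => huniq _ heig⟩

theorem stmt_9 (N : ℕ) (hN : 1 ≤ N) (T R₁ R₂ : Matrix (Fin N) (Fin N) ℂ)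
    (hT : ∀ i j : Fin N, T i j = if (i : ℕ) + (j : ℕ) = N - 1 then 1 else 0)
    (hinv : IsUnit R₁.det)
    (h1 : T * R₁.map (starRingEnd ℂ) * T = R₁)
    (h2 : T * R₂.map (starRingEnd ℂ) * T = R₂)
    (lam : ℝ) (w : Fin N → ℂ)
    (hw : (R₁⁻¹ * R₂) *ᵥ w = (lam : ℂ) • w) :
    (R₁⁻¹ * R₂) *ᵥ (T *ᵥ star w) = (lam : ℂ) • (T *ᵥ star w) ∧
      (w ≠ 0 →
        (∀ u : Fin N → ℂ, (R₁⁻¹ * R₂) *ᵥ u = (lam : ℂ) • u → ∃ c : ℂ, u = c • w) →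
        ∃ c : ℂ, T *ᵥ star w = c • w) :=
  stmt_9_general N T R₁ R₂ hT h1 h2 lam w hw
end

section
/- Let N ≥ 1 and let p : Fin N → ℝ be sensor positions that are centro-symmetric, i.e., there exists a real P with p(N−1−k) = P − p(k) for every k. Let φ be real and define a : Fin N → ℂ by a k = exp(I·φ·p k). Then the rank-one matrix R with (i,j) entry a i * conj (a j) satisfies T * (R.map conj) * T = R, where T is the N×N exchange matrix with entries T i j = 1 if (i : ℕ) + (j : ℕ) = N − 1 and 0 otherwise. -/
/-!
The exchange matrix is the permutation matrix of `k ↦ N - 1 - k`, so conjugating by it reverses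
rows and columns: `(T * M * T) i j = M (rev i) (rev j)`. Centro-symmetry of the array makes the
steering vector conjugate-symmetric up to a unimodular phase, `a (rev k) = c * conj (a k)` with
`c = exp (i φ P)`, and the phase cancels in the rank-one matrix `a aᴴ` because `conj c * c = 1`.
-/

open Matrix ComplexConjugate

lemma Fin.permMatrix_revPerm_eq {R : Type*} [Zero R] [One R] {N : ℕ} (T : Matrix (Fin N) (Fin N) R)
    (hT : ∀ i j : Fin N, T i j = if (i : ℕ) + (j : ℕ) = N - 1 then 1 else 0) :
    T = (Fin.revPerm : Equiv.Perm (Fin N)).permMatrix R := by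
  ext i j
  rw [hT, Equiv.Perm.permMatrix, PEquiv.toMatrix_apply]
  simp only [Equiv.toPEquiv_apply, Option.mem_def, Option.some.injEq, Fin.revPerm_apply,
    Fin.ext_iff, Fin.val_rev]
  congr 1
  apply propext
  omega

lemma Fin.permMatrix_revPerm_mul_mul {R : Type*} [NonAssocSemiring R] {N : ℕ}
    (M : Matrix (Fin N) (Fin N) R) :
    Fin.revPerm.permMatrix R * M * Fin.revPerm.permMatrix R = M.submatrix Fin.rev Fin.rev := by
  rw [Equiv.Perm.permMatrix, PEquiv.toMatrix_toPEquiv_mul, PEquiv.mul_toMatrix_toPEquiv,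
    submatrix_submatrix]
  rfl

lemma Matrix.submatrix_map_star_vecMulVec_self {n α : Type*} [CommSemiring α] [StarRing α]
    (a : n → α) (e : n → n) (c : α) (hc : star c * c = 1) (ha : ∀ k, a (e k) = c * star (a k)) :
    ((vecMulVec a (star a)).map star).submatrix e e = vecMulVec a (star a) := by
  ext i j
  simp only [submatrix_apply, map_apply, vecMulVec_apply, Pi.star_apply, star_mul, star_star, ha]
  calc c * star (a j) * (a i * star c) = (star c * c) * (a i * star (a j)) := by ring
    _ = a i * star (a j) := by rw [hc, one_mul]

lemma Complex.conj_exp_I_mul_mul_ofReal_mul_exp (φ x : ℝ) :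
    conj (exp (I * φ * x)) * exp (I * φ * x) = 1 := by
  rw [← exp_conj, ← exp_add]
  simp

lemma Complex.exp_I_mul_mul_ofReal_sub (φ x y : ℝ) :
    exp (I * φ * (x - y : ℝ)) = exp (I * φ * x) * conj (exp (I * φ * y)) := by
  rw [← exp_conj, ← exp_add]
  congr 1
  simp
  ring

theorem stmt_10_general (N : ℕ) (p : Fin N → ℝ) (P : ℝ)
    (hp : ∀ k : Fin N, p (Fin.rev k) = P - p k)
    (φ : ℝ) (a : Fin N → ℂ)
    (ha : ∀ k, a k = Complex.exp (Complex.I * (φ : ℂ) * (p k : ℂ)))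
    (R : Matrix (Fin N) (Fin N) ℂ) (hR : R = Matrix.vecMulVec a (star a))
    (T : Matrix (Fin N) (Fin N) ℂ)
    (hT : ∀ i j : Fin N, T i j = if (i : ℕ) + (j : ℕ) = N - 1 then 1 else 0) :
    T * R.map (starRingEnd ℂ) * T = R := by
  have ha_rev : ∀ k, a k.rev = Complex.exp (Complex.I * φ * P) * conj (a k) := fun k => by
    rw [ha, ha, hp, Complex.exp_I_mul_mul_ofReal_sub]
  rw [hR, Fin.permMatrix_revPerm_eq T hT, Fin.permMatrix_revPerm_mul_mul]
  exact submatrix_map_star_vecMulVec_self a Fin.rev _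
    (Complex.conj_exp_I_mul_mul_ofReal_mul_exp φ P) ha_rev

theorem stmt_10 (N : ℕ) (hN : 1 ≤ N) (p : Fin N → ℝ) (P : ℝ)
    (hp : ∀ k : Fin N, p (Fin.rev k) = P - p k)
    (φ : ℝ) (a : Fin N → ℂ)
    (ha : ∀ k, a k = Complex.exp (Complex.I * (φ : ℂ) * (p k : ℂ)))
    (R : Matrix (Fin N) (Fin N) ℂ) (hR : R = Matrix.vecMulVec a (star a))
    (T : Matrix (Fin N) (Fin N) ℂ)
    (hT : ∀ i j : Fin N, T i j = if (i : ℕ) + (j : ℕ) = N - 1 then 1 else 0) :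
    T * R.map (starRingEnd ℂ) * T = R :=
  stmt_10_general N p P hp φ a ha R hR T hT
end

section
/- Let R_s and R_n be N×N complex Hermitian positive semidefinite matrices and put R_x = R_s + R_n. Suppose w₀ satisfies Q_{R_s}(w₀) ≥ 1 and Q_{R_x}(w₀) ≤ Q_{R_x}(w) for every w with Q_{R_s}(w) ≥ 1, where Q_R(v) = re(star v ⬝ᵥ (R *ᵥ v)). Then Q_{R_s}(w₀) = 1, and for every w with Q_{R_s}(w) = 1 one has Q_{R_n}(w₀) ≤ Q_{R_n}(w). -/
/-!
Rescaling a feasible vector by a real factor `c` multiplies both quadratic forms by `c ^ 2`.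
If the minimiser `w₀` had `Q_{R_s}(w₀) = s > 1`, then `w₀ / √s` would still be feasible with
objective `Q_{R_x}(w₀) / s < Q_{R_x}(w₀)` (the objective is positive since `Q_{R_n} ≥ 0`), so the
constraint is active. On the sphere `Q_{R_s} = 1` the objective is `1 + Q_{R_n}`, so minimising
`Q_{R_x}` there is the same as minimising `Q_{R_n}`.
-/

open Matrix
open scoped ComplexOrder

namespace Matrix

variable {n : Type*} [Fintype n]

def quadForm (R : Matrix n n ℂ) (v : n → ℂ) : ℝ := (star v ⬝ᵥ (R *ᵥ v)).re

theorem quadForm_real_smul (R : Matrix n n ℂ) (c : ℝ) (v : n → ℂ) :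
    quadForm R (c • v) = c ^ 2 * quadForm R v := by
  rw [← algebraMap_smul ℂ c v, Complex.coe_algebraMap]
  have h : star ((c : ℂ) • v) ⬝ᵥ (R *ᵥ ((c : ℂ) • v)) = (c ^ 2 : ℝ) * (star v ⬝ᵥ (R *ᵥ v)) := by
    rw [star_smul, mulVec_smul, smul_dotProduct, dotProduct_smul, smul_smul, smul_eq_mul,
      Complex.star_def, Complex.conj_ofReal]
    push_cast
    ring
  rw [quadForm, h, Complex.re_ofReal_mul, quadForm]

theorem quadForm_add (R S : Matrix n n ℂ) (v : n → ℂ) :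
    quadForm (R + S) v = quadForm R v + quadForm S v := by
  rw [quadForm, add_mulVec, dotProduct_add, Complex.add_re, quadForm, quadForm]

theorem PosSemidef.quadForm_nonneg {R : Matrix n n ℂ} (hR : R.PosSemidef) (v : n → ℂ) :
    0 ≤ quadForm R v :=
  (Complex.nonneg_iff.mp (hR.dotProduct_mulVec_nonneg v)).1

theorem quadForm_eq_one_of_minimizer {Rs Rx : Matrix n n ℂ} {w₀ : n → ℂ}
    (hpos : 0 < quadForm Rx w₀) (hfeas : 1 ≤ quadForm Rs w₀)
    (hopt : ∀ w, 1 ≤ quadForm Rs w → quadForm Rx w₀ ≤ quadForm Rx w) :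
    quadForm Rs w₀ = 1 := by
  set s := quadForm Rs w₀
  have hs : 0 < s := one_pos.trans_le hfeas
  have hc : (√s)⁻¹ ^ 2 = s⁻¹ := by rw [inv_pow, Real.sq_sqrt hs.le]
  have hscaled : quadForm Rs ((√s)⁻¹ • w₀) = 1 := by
    rw [quadForm_real_smul, hc, inv_mul_cancel₀ hs.ne']
  have hle := hopt _ hscaled.ge
  rw [quadForm_real_smul, hc] at hle
  refine le_antisymm ?_ hfeas
  by_contra! hs_gt
  have hshrink : s⁻¹ * quadForm Rx w₀ < quadForm Rx w₀ :=
    mul_lt_of_lt_one_left hpos (inv_lt_one_of_one_lt₀ hs_gt)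
  linarith

end Matrix

theorem stmt_11_general (N : ℕ) (Rs Rn : Matrix (Fin N) (Fin N) ℂ)
    (hRn : Rn.PosSemidef)
    (Rx : Matrix (Fin N) (Fin N) ℂ) (hRx : Rx = Rs + Rn)
    (w₀ : Fin N → ℂ)
    (hfeas : 1 ≤ (star w₀ ⬝ᵥ (Rs *ᵥ w₀)).re)
    (hopt : ∀ w : Fin N → ℂ, 1 ≤ (star w ⬝ᵥ (Rs *ᵥ w)).re →
      (star w₀ ⬝ᵥ (Rx *ᵥ w₀)).re ≤ (star w ⬝ᵥ (Rx *ᵥ w)).re) :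
    (star w₀ ⬝ᵥ (Rs *ᵥ w₀)).re = 1 ∧
      ∀ w : Fin N → ℂ, (star w ⬝ᵥ (Rs *ᵥ w)).re = 1 →
        (star w₀ ⬝ᵥ (Rn *ᵥ w₀)).re ≤ (star w ⬝ᵥ (Rn *ᵥ w)).re := by
  subst hRx
  have hpos : 0 < quadForm (Rs + Rn) w₀ := by
    rw [quadForm_add]
    exact add_pos_of_pos_of_nonneg (one_pos.trans_le hfeas) (hRn.quadForm_nonneg w₀)
  have hs : quadForm Rs w₀ = 1 := quadForm_eq_one_of_minimizer hpos hfeas hopt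
  refine ⟨hs, fun w (hw : quadForm Rs w = 1) => ?_⟩
  have hle : quadForm (Rs + Rn) w₀ ≤ quadForm (Rs + Rn) w := hopt w hw.ge
  rw [quadForm_add, quadForm_add, hs, hw] at hle
  exact (add_le_add_iff_left 1).mp hle

theorem stmt_11 (N : ℕ) (Rs Rn : Matrix (Fin N) (Fin N) ℂ)
    (hRs : Rs.PosSemidef) (hRn : Rn.PosSemidef)
    (Rx : Matrix (Fin N) (Fin N) ℂ) (hRx : Rx = Rs + Rn)
    (w₀ : Fin N → ℂ)
    (hfeas : 1 ≤ (star w₀ ⬝ᵥ (Rs *ᵥ w₀)).re)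
    (hopt : ∀ w : Fin N → ℂ, 1 ≤ (star w ⬝ᵥ (Rs *ᵥ w)).re →
      (star w₀ ⬝ᵥ (Rx *ᵥ w₀)).re ≤ (star w ⬝ᵥ (Rx *ᵥ w)).re) :
    (star w₀ ⬝ᵥ (Rs *ᵥ w₀)).re = 1 ∧
      ∀ w : Fin N → ℂ, (star w ⬝ᵥ (Rs *ᵥ w)).re = 1 →
        (star w₀ ⬝ᵥ (Rn *ᵥ w₀)).re ≤ (star w ⬝ᵥ (Rn *ᵥ w)).re :=
  stmt_11_general N Rs Rn hRn Rx hRx w₀ hfeas hopt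
end
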